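/- Let V = {1,…,d} and let F : 2^V → ℝ be a normalized submodular set function. Let x ∈ ℝ^d and let σ be a permutation of V with x_{σ(1)} ≥ ⋯ ≥ x_{σ(d)}. Define y ∈ ℝ^d by y_{σ(k)} = F(S^σ_k) − F(S^σ_{k−1}) for k = 1,…,d, where S^σ_k = {σ(1),…,σ(k)} and S^σ_0 = ∅. Then y ∈ B(F), and ⟨x, y⟩ ≥ ⟨x, s⟩ for all s ∈ B(F); in particular ⟨x, y⟩ = max_{s ∈ B(F)} ⟨x, s⟩. -/
import Mathlib


noncomputable section

/-- The chain set `S^σ_k = {σ(1), …, σ(k)}` (as the image under `σ` of the first `k`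
indices of `Fin d`). -/
def chain {d : ℕ} (σ : Equiv.Perm (Fin d)) (k : ℕ) : Finset (Fin d) :=
  (Finset.univ.filter fun j : Fin d => (j : ℕ) < k).image σ

lemma chain_zero {d : ℕ} (σ : Equiv.Perm (Fin d)) : chain σ 0 = ∅ := by
  simp [chain]

lemma chain_succ {d : ℕ} (σ : Equiv.Perm (Fin d)) {k : ℕ} (h : k < d) :
    chain σ (k + 1) = insert (σ ⟨k, h⟩) (chain σ k) := by
  unfold chain
  rw [← Finset.image_insert]
  congr 1
  ext j
  simp only [Finset.mem_filter, Finset.mem_univ, true_and, Finset.mem_insert, Fin.ext_iff]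
  omega

lemma notMem_chain {d : ℕ} (σ : Equiv.Perm (Fin d)) {k : ℕ} (h : k < d) :
    σ ⟨k, h⟩ ∉ chain σ k := by
  intro hm
  obtain ⟨a, ha, hae⟩ := Finset.mem_image.1 hm
  have := σ.injective hae
  subst this
  simp at ha

lemma chain_univ {d : ℕ} (σ : Equiv.Perm (Fin d)) : chain σ d = Finset.univ := by
  ext j
  simp only [chain, Finset.mem_image, Finset.mem_filter, Finset.mem_univ, true_and, iff_true]
  exact ⟨σ.symm j, (σ.symm j).isLt, σ.apply_symm_apply j⟩

/-- Let `F` be a normalized submodular function on `V = Fin d`, let `σ`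
sort `x` in decreasing order, and let `y` be the greedy vector
`y(σ(k)) = F(S^σ_k) − F(S^σ_{k−1})`. Then `y` lies in the base polyhedron `B(F)` and
`⟨x, y⟩ ≥ ⟨x, s⟩` for all `s ∈ B(F)` (so `⟨x, y⟩ = max_{s ∈ B(F)} ⟨x, s⟩`). -/
theorem stmt13 {d : ℕ} (F : Finset (Fin d) → ℝ)
    (hF0 : F ∅ = 0)
    (hFsub : ∀ A B : Finset (Fin d), F (A ∪ B) + F (A ∩ B) ≤ F A + F B)
    (x : Fin d → ℝ)
    (σ : Equiv.Perm (Fin d))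
    (hxσ : ∀ k l : Fin d, k ≤ l → x (σ l) ≤ x (σ k))
    (y : Fin d → ℝ)
    (hy : ∀ k : Fin d, y (σ k) = F (chain σ ((k : ℕ) + 1)) - F (chain σ (k : ℕ))) :
    ((∑ j, y j = F Finset.univ) ∧ ∀ A : Finset (Fin d), ∑ j ∈ A, y j ≤ F A) ∧
    ∀ s : Fin d → ℝ,
      ((∑ j, s j = F Finset.univ) ∧ ∀ A : Finset (Fin d), ∑ j ∈ A, s j ≤ F A) →
      ∑ i, x i * s i ≤ ∑ i, x i * y i := by
  rcases Nat.eq_zero_or_pos d with hd | hd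
  · subst hd
    refine ⟨⟨?_, ?_⟩, ?_⟩
    · simp [Finset.univ_eq_empty, hF0]
    · intro A
      have hA : A = ∅ := Finset.eq_empty_of_isEmpty A
      simp [hA, hF0]
    · intro s _
      simp
  -- telescoping: sum of y over chain σ k is F (chain σ k)
  have hyF : ∀ k, k ≤ d → ∑ j ∈ chain σ k, y j = F (chain σ k) := by
    intro k
    induction k with
    | zero => intro _; simp [chain_zero, hF0]
    | succ k ih =>
      intro hk
      have hkd : k < d := hk
      have hyi := hy ⟨k, hkd⟩
      simp only [Fin.val_mk] at hyi
      have hsum : ∑ j ∈ chain σ (k + 1), y j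
          = (∑ j ∈ chain σ k, y j) + y (σ ⟨k, hkd⟩) := by
        rw [chain_succ σ hkd, Finset.sum_insert (notMem_chain σ hkd)]
        ring
      rw [hsum, ih (le_of_lt hkd), hyi]
      ring
  have h1a : ∑ j, y j = F Finset.univ := by
    have := hyF d le_rfl
    rwa [chain_univ σ] at this
  -- subadditivity: ∑_{j ∈ A} y j ≤ F A
  have h1b : ∀ A : Finset (Fin d), ∑ j ∈ A, y j ≤ F A := by
    have key : ∀ k, k ≤ d → ∀ A : Finset (Fin d),
        ∑ j ∈ A ∩ chain σ k, y j ≤ F (A ∩ chain σ k) := by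
      intro k
      induction k with
      | zero => intro _ A; simp [chain_zero, hF0]
      | succ k ih =>
        intro hk A
        have hkd : k < d := hk
        set i := σ ⟨k, hkd⟩ with hi_def
        have hic : i ∉ chain σ k := notMem_chain σ hkd
        by_cases hmem : i ∈ A
        · have hins : A ∩ chain σ (k + 1) = insert i (A ∩ chain σ k) := by
            rw [chain_succ σ hkd, Finset.inter_insert_of_mem hmem]
          have hni : i ∉ A ∩ chain σ k := fun h =>
            hic (Finset.mem_of_mem_inter_right h)
          have hsub := hFsub (insert i (A ∩ chain σ k)) (chain σ k)
          have hu : insert i (A ∩ chain σ k) ∪ chain σ k = chain σ (k + 1) := by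
            rw [chain_succ σ hkd, Finset.insert_union,
              Finset.union_eq_right.mpr Finset.inter_subset_right]
          have hinter : insert i (A ∩ chain σ k) ∩ chain σ k = A ∩ chain σ k := by
            rw [Finset.insert_inter_of_notMem hic, Finset.inter_assoc, Finset.inter_self]
          rw [hu, hinter, ← hins] at hsub
          have hyi := hy ⟨k, hkd⟩
          simp only [Fin.val_mk] at hyi
          rw [← hi_def] at hyi
          have ihk := ih (le_of_lt hkd) A
          have hsumeq : ∑ j ∈ A ∩ chain σ (k + 1), y j
              = y i + ∑ j ∈ A ∩ chain σ k, y j := by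
            rw [hins, Finset.sum_insert hni]
          rw [hsumeq]
          linarith
        · have heq : A ∩ chain σ (k + 1) = A ∩ chain σ k := by
            rw [chain_succ σ hkd, Finset.inter_insert_of_notMem hmem]
          rw [heq]
          exact ih (le_of_lt hkd) A
    intro A
    have := key d le_rfl A
    rwa [chain_univ σ, Finset.inter_univ] at this
  refine ⟨⟨h1a, h1b⟩, ?_⟩
  rintro s ⟨hs1, hs2⟩
  set D : ℕ → ℝ := fun k => F (chain σ k) - ∑ j ∈ chain σ k, s j with hD_def
  have hD0 : ∀ k, 0 ≤ D k := fun k => sub_nonneg.2 (hs2 _)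
  have hDd : D d = 0 := by
    simp only [hD_def, chain_univ σ, hs1, sub_self]
  -- Abel-type induction
  have key2 : ∀ k, (hk : k ≤ d) →
      x (σ ⟨min (k - 1) (d - 1), by omega⟩) * D k ≤
        ∑ j ∈ chain σ k, x j * (y j - s j) := by
    intro k
    induction k with
    | zero =>
      intro _
      simp [chain_zero, hD_def, hF0]
    | succ k ih =>
      intro hk
      have hkd : k < d := hk
      have hcur : (⟨min (k + 1 - 1) (d - 1), by omega⟩ : Fin d) = ⟨k, hkd⟩ :=
        Fin.ext (by simp; omega)
      rw [hcur]
      set i := σ ⟨k, hkd⟩ with hi_def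
      have hstep : ∑ j ∈ chain σ (k + 1), x j * (y j - s j)
          = (∑ j ∈ chain σ k, x j * (y j - s j)) + x i * (y i - s i) := by
        rw [chain_succ σ hkd, Finset.sum_insert (notMem_chain σ hkd)]
        ring
      have hDdiff : y i - s i = D (k + 1) - D k := by
        have hyi := hy ⟨k, hkd⟩
        simp only [Fin.val_mk] at hyi
        rw [← hi_def] at hyi
        have hsum : ∑ j ∈ chain σ (k + 1), s j = (∑ j ∈ chain σ k, s j) + s i := by
          rw [chain_succ σ hkd, Finset.sum_insert (notMem_chain σ hkd)]
          ring
        simp only [hD_def, hsum]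
        rw [hyi]
        ring
      have hprev := ih (le_of_lt hkd)
      have hxle : x i ≤ x (σ ⟨min (k - 1) (d - 1), by omega⟩) := by
        apply hxσ
        simp only [Fin.mk_le_mk]
        omega
      have hDk := hD0 k
      have hmul : x i * D k ≤ x (σ ⟨min (k - 1) (d - 1), by omega⟩) * D k :=
        mul_le_mul_of_nonneg_right hxle hDk
      rw [hstep, hDdiff]
      nlinarith [hprev]
  have hfinal := key2 d le_rfl
  rw [hDd, chain_univ σ, mul_zero] at hfinal
  have hsplit : ∑ j, x j * (y j - s j) = (∑ j, x j * y j) - ∑ j, x j * s j := by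
    rw [← Finset.sum_sub_distrib]
    exact Finset.sum_congr rfl fun j _ => by ring
  rw [hsplit] at hfinal
  linarith
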